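/- Assume ∫_D |1−z|^{−1} ν(dz) < ∞ (in particular ν({1}) = 0). Then σ² := ∫_{D∖{1}} (1−|z|²)/|1−z|² ν(dz) < ∞, (1/n) ∫_{D∖{1}} |1−z^n|²/|1−z|² ν(dz) → 0 as n → ∞, and Var_n/n → σ² as n → ∞. -/

import Mathlib

/-!
For `z ≠ 1` the covariance sum has the closed form
`n + 2 ∑_{k=1}^{n-1} (n-k) Re zᵏ = n P(z) - 2 Re (z (1 - zⁿ) / (1 - z)²)`,
where `P(z) = Re ((1 + z) / (1 - z)) = (1 - |z|²) / |1 - z|²` is the Poisson kernel at `1`.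
Both the error term of `Var_n / n` and the integrand `|1 - zⁿ|² / (n |1 - z|²)` are bounded
by `2 |1 - zⁿ| / (n |1 - z|²)`, which is at most `2 / |1 - z|` because `|1 - zⁿ| ≤ n |1 - z|`,
and tends to `0` because `|1 - zⁿ| ≤ 2`. Dominated convergence with the integrable majorant
`|1 - z|⁻¹` gives both limits, and `P ≤ 2 / |1 - z|` gives `σ² < ∞`.
-/

open MeasureTheory Filter Topology Set

/-- The variance sequence `Var_n = ∫_D (n + 2 ∑_{k=1}^{n-1} (n-k) Re(z^k)) ν(dz)`. -/
noncomputable def VarSeq (ν : Measure ℂ) (n : ℕ) : ℝ :=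
  ∫ z, ((n : ℝ) + 2 * ∑ k ∈ Finset.Ico 1 n, ((n : ℝ) - (k : ℝ)) * (z ^ k).re) ∂ν

/-- `σ² = ∫_{D∖{1}} (1-|z|²)/|1-z|² ν(dz) ∈ [0,∞]`. -/
noncomputable def sigmaSq (ν : Measure ℂ) : ENNReal :=
  ∫⁻ z in {z : ℂ | z ≠ 1},
    ENNReal.ofReal ((1 - ‖z‖ ^ 2) / ‖1 - z‖ ^ 2) ∂ν

section NormedRing

variable {R : Type*} [NormedRing R] [NormOneClass R] {z : R}

theorem norm_pow_le_one_of_norm_le_one (hz : ‖z‖ ≤ 1) (n : ℕ) : ‖z ^ n‖ ≤ 1 :=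
  (norm_pow_le z n).trans (pow_le_one₀ (norm_nonneg z) hz)

theorem norm_one_sub_pow_le_mul (hz : ‖z‖ ≤ 1) (n : ℕ) : ‖1 - z ^ n‖ ≤ n * ‖1 - z‖ := by
  have hgeom : ‖∑ i ∈ Finset.range n, z ^ i‖ ≤ n := by
    calc ‖∑ i ∈ Finset.range n, z ^ i‖ ≤ ∑ i ∈ Finset.range n, ‖z ^ i‖ := norm_sum_le _ _
      _ ≤ ∑ _i ∈ Finset.range n, (1 : ℝ) :=
        Finset.sum_le_sum fun i _ => norm_pow_le_one_of_norm_le_one hz i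
      _ = n := by simp
  rw [← mul_neg_geom_sum]
  exact (norm_mul_le _ _).trans ((mul_le_mul_of_nonneg_left hgeom (norm_nonneg _)).trans_eq
    (mul_comm _ _))

theorem norm_one_sub_pow_le_two (hz : ‖z‖ ≤ 1) (n : ℕ) : ‖1 - z ^ n‖ ≤ 2 :=
  (norm_sub_le _ _).trans (by rw [norm_one]; linarith [norm_pow_le_one_of_norm_le_one hz n])

end NormedRing

noncomputable def poissonKernelOne (z : ℂ) : ℝ := (1 - ‖z‖ ^ 2) / ‖1 - z‖ ^ 2

theorem measurable_poissonKernelOne : Measurable poissonKernelOne := by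
  unfold poissonKernelOne; fun_prop

theorem Complex.re_one_add_div_one_sub (z : ℂ) :
    ((1 + z) / (1 - z)).re = poissonKernelOne z := by
  rw [poissonKernelOne, Complex.div_re, Complex.sq_norm, Complex.sq_norm]
  simp only [Complex.add_re, Complex.sub_re, Complex.add_im, Complex.sub_im, Complex.one_re,
    Complex.one_im, Complex.normSq_apply]
  ring

theorem poissonKernelOne_nonneg {z : ℂ} (hz : ‖z‖ ≤ 1) : 0 ≤ poissonKernelOne z :=
  div_nonneg (by nlinarith [norm_nonneg z]) (sq_nonneg _)

theorem poissonKernelOne_le {z : ℂ} (hz : ‖z‖ ≤ 1) : poissonKernelOne z ≤ 2 * ‖1 - z‖⁻¹ := by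
  rcases eq_or_ne z 1 with rfl | hz1
  · simp [poissonKernelOne]
  have hpos : 0 < ‖1 - z‖ := norm_pos_iff.mpr (sub_ne_zero.mpr hz1.symm)
  have hgap : 1 - ‖z‖ ≤ ‖1 - z‖ := by simpa using norm_sub_norm_le (1 : ℂ) z
  calc poissonKernelOne z ≤ 2 * ‖1 - z‖ / ‖1 - z‖ ^ 2 := by
        unfold poissonKernelOne; gcongr; nlinarith [norm_nonneg z]
    _ = 2 * ‖1 - z‖⁻¹ := by field_simp

theorem sum_Ico_sub_mul_pow_mul_one_sub_sq (n : ℕ) (z : ℂ) :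
    (∑ k ∈ Finset.Ico 1 n, ((n : ℂ) - k) * z ^ k) * (1 - z) ^ 2
      = z * (n * (1 - z) - (1 - z ^ n)) := by
  induction n with
  | zero => simp
  | succ n ih =>
    rcases Nat.eq_zero_or_pos n with rfl | hn
    · simp
    have hgeom := geom_sum_Ico_mul z hn
    rw [Finset.sum_Ico_succ_top hn]
    simp only [Nat.cast_succ, add_sub_right_comm _ (1 : ℂ), add_mul, Finset.sum_add_distrib,
      one_mul]
    linear_combination ih - (1 - z) * hgeom

theorem varSeq_integrand_eq (n : ℕ) {z : ℂ} (hz : z ≠ 1) :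
    (n : ℝ) + 2 * ∑ k ∈ Finset.Ico 1 n, ((n : ℝ) - k) * (z ^ k).re
      = n * poissonKernelOne z - 2 * (z * (1 - z ^ n) / (1 - z) ^ 2).re := by
  have h1 : (1 : ℂ) - z ≠ 0 := sub_ne_zero.mpr hz.symm
  have hC : (n : ℂ) + 2 * ∑ k ∈ Finset.Ico 1 n, ((n : ℂ) - k) * z ^ k
      = n * ((1 + z) / (1 - z)) - 2 * (z * (1 - z ^ n) / (1 - z) ^ 2) := by
    rw [eq_div_of_mul_eq (pow_ne_zero 2 h1) (sum_Ico_sub_mul_pow_mul_one_sub_sq n z)]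
    field_simp
    ring
  simpa [Complex.re_one_add_div_one_sub] using congrArg Complex.re hC

theorem norm_one_sub_pow_div_le_inv {z : ℂ} (hz : ‖z‖ ≤ 1) (n : ℕ) :
    ‖1 - z ^ n‖ / (n * ‖1 - z‖ ^ 2) ≤ ‖1 - z‖⁻¹ := by
  rcases eq_or_ne (n * ‖1 - z‖) 0 with h0 | h0
  · simp [sq, ← mul_assoc, h0]
  obtain ⟨hn, hz1⟩ := mul_ne_zero_iff.mp h0
  calc ‖1 - z ^ n‖ / (n * ‖1 - z‖ ^ 2) ≤ n * ‖1 - z‖ / (n * ‖1 - z‖ ^ 2) := by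
        gcongr; exact norm_one_sub_pow_le_mul hz n
    _ = ‖1 - z‖⁻¹ := by field_simp

theorem tendsto_norm_one_sub_pow_div {z : ℂ} (hz : ‖z‖ ≤ 1) :
    Tendsto (fun n : ℕ => ‖1 - z ^ n‖ / (n * ‖1 - z‖ ^ 2)) atTop (𝓝 0) := by
  have hlim : Tendsto (fun n : ℕ => 2 / ‖1 - z‖ ^ 2 * (n : ℝ)⁻¹) atTop (𝓝 0) := by
    simpa only [mul_zero] using
      (tendsto_inv_atTop_nhds_zero_nat (𝕜 := ℝ)).const_mul (2 / ‖1 - z‖ ^ 2)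
  refine squeeze_zero (fun n => by positivity) (fun n => ?_) hlim
  rw [div_mul_eq_div_div_swap, div_eq_mul_inv _ (n : ℝ)]
  gcongr
  exact norm_one_sub_pow_le_two hz n

section GordinLifsic

variable {ν : Measure ℂ}

theorem measure_singleton_one_eq_zero (hGL : ∫⁻ z, (ENNReal.ofReal ‖1 - z‖)⁻¹ ∂ν < ⊤) :
    ν {1} = 0 := by
  refine measure_mono_null (fun z hz => ?_) (ae_iff.mp (ae_lt_top (by fun_prop) hGL.ne))
  simp [mem_singleton_iff.mp hz]

theorem integrable_inv_norm_one_sub (hGL : ∫⁻ z, (ENNReal.ofReal ‖1 - z‖)⁻¹ ∂ν < ⊤) :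
    Integrable (fun z => ‖1 - z‖⁻¹) ν := by
  simpa using integrable_toReal_of_lintegral_ne_top (by fun_prop) hGL.ne

theorem tendsto_integral_of_norm_sub_le_norm_one_sub_pow_div {E : Type*} [NormedAddCommGroup E]
    [NormedSpace ℝ E] (hD : ∀ᵐ z ∂ν, ‖z‖ ≤ 1) (hint : Integrable (fun z => ‖1 - z‖⁻¹) ν)
    {F : ℕ → ℂ → E} {f : ℂ → E} (hF : ∀ n, AEStronglyMeasurable (F n) ν) (hf : Integrable f ν)
    {C : ℝ} (hC : 0 ≤ C)
    (hFf : ∀ᵐ z ∂ν, ∀ n ≠ 0, ‖F n z - f z‖ ≤ C * (‖1 - z ^ n‖ / (n * ‖1 - z‖ ^ 2))) :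
    Tendsto (fun n => ∫ z, F n z ∂ν) atTop (𝓝 (∫ z, f z ∂ν)) := by
  refine tendsto_integral_filter_of_dominated_convergence (fun z => ‖f z‖ + C * ‖1 - z‖⁻¹)
    (.of_forall hF) ?_ (hf.norm.add (hint.const_mul C)) ?_
  · filter_upwards [eventually_ne_atTop 0] with n hn
    filter_upwards [hD, hFf] with z hz hFfz
    calc ‖F n z‖ ≤ ‖f z‖ + ‖F n z - f z‖ := norm_le_insert' _ _
      _ ≤ ‖f z‖ + C * ‖1 - z‖⁻¹ := by
        gcongr
        exact (hFfz n hn).trans (by gcongr; exact norm_one_sub_pow_div_le_inv hz n)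
  · filter_upwards [hD, hFf] with z hz hFfz
    refine tendsto_iff_norm_sub_tendsto_zero.mpr (squeeze_zero' (.of_forall fun n => norm_nonneg _)
      ((eventually_ne_atTop 0).mono hFfz) ?_)
    simpa using (tendsto_norm_one_sub_pow_div hz).const_mul C

theorem integrable_poissonKernelOne (hD : ∀ᵐ z ∂ν, ‖z‖ ≤ 1)
    (hint : Integrable (fun z => ‖1 - z‖⁻¹) ν) : Integrable poissonKernelOne ν :=
  (hint.const_mul 2).mono' measurable_poissonKernelOne.aestronglyMeasurable
    (hD.mono fun _ hz => (Real.norm_of_nonneg (poissonKernelOne_nonneg hz)).trans_le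
      (poissonKernelOne_le hz))

theorem restrict_ne_one_eq_self (h1 : ν {1} = 0) : ν.restrict {z | z ≠ 1} = ν :=
  Measure.restrict_eq_self_of_ae_mem (compl_mem_ae_iff.mpr h1)

theorem sigmaSq_eq_ofReal_integral (h1 : ν {1} = 0) (hD : ∀ᵐ z ∂ν, ‖z‖ ≤ 1)
    (hint : Integrable (fun z => ‖1 - z‖⁻¹) ν) :
    sigmaSq ν = ENNReal.ofReal (∫ z, poissonKernelOne z ∂ν) := by
  rw [sigmaSq, restrict_ne_one_eq_self h1, ofReal_integral_eq_lintegral_ofReal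
    (integrable_poissonKernelOne hD hint) (hD.mono fun z hz => poissonKernelOne_nonneg hz)]
  rfl

theorem tendsto_inv_mul_setIntegral_norm_one_sub_pow_sq (h1 : ν {1} = 0)
    (hD : ∀ᵐ z ∂ν, ‖z‖ ≤ 1) (hint : Integrable (fun z => ‖1 - z‖⁻¹) ν) :
    Tendsto (fun n : ℕ => (1 / (n : ℝ)) * ∫ z in {z : ℂ | z ≠ 1},
      ‖1 - z ^ n‖ ^ 2 / ‖1 - z‖ ^ 2 ∂ν) atTop (𝓝 0) := by
  simp_rw [restrict_ne_one_eq_self h1, ← integral_const_mul]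
  refine integral_zero ℂ ℝ ▸ tendsto_integral_of_norm_sub_le_norm_one_sub_pow_div hD hint
    (fun n => Measurable.aestronglyMeasurable (by fun_prop)) (integrable_zero _ _ _) zero_le_two
    (hD.mono fun z hz n _ => ?_)
  rw [sub_zero, Real.norm_of_nonneg (by positivity)]
  calc 1 / (n : ℝ) * (‖1 - z ^ n‖ ^ 2 / ‖1 - z‖ ^ 2)
      = ‖1 - z ^ n‖ * (‖1 - z ^ n‖ / (n * ‖1 - z‖ ^ 2)) := by ring
    _ ≤ 2 * (‖1 - z ^ n‖ / (n * ‖1 - z‖ ^ 2)) := by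
      gcongr; exact norm_one_sub_pow_le_two hz n

theorem tendsto_varSeq_div (h1 : ν {1} = 0) (hD : ∀ᵐ z ∂ν, ‖z‖ ≤ 1)
    (hint : Integrable (fun z => ‖1 - z‖⁻¹) ν) :
    Tendsto (fun n : ℕ => VarSeq ν n / n) atTop (𝓝 (∫ z, poissonKernelOne z ∂ν)) := by
  simp_rw [VarSeq, ← integral_div]
  refine tendsto_integral_of_norm_sub_le_norm_one_sub_pow_div hD hint
    (fun n => by fun_prop) (integrable_poissonKernelOne hD hint) zero_le_two ?_
  filter_upwards [hD, compl_mem_ae_iff.mpr h1] with z hz hz1 n hn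
  have hn' : (n : ℝ) ≠ 0 := Nat.cast_ne_zero.mpr hn
  rw [varSeq_integrand_eq n hz1]
  set w := z * (1 - z ^ n) / (1 - z) ^ 2
  have hw : ‖w‖ ≤ ‖1 - z ^ n‖ / ‖1 - z‖ ^ 2 := by
    rw [norm_div, norm_mul, norm_pow]
    gcongr
    exact mul_le_of_le_one_left (norm_nonneg _) hz
  calc ‖(n * poissonKernelOne z - 2 * w.re) / n - poissonKernelOne z‖
      = 2 * |w.re| / n := by
        rw [show (n * poissonKernelOne z - 2 * w.re) / n - poissonKernelOne z = -(2 * w.re / n) by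
          field_simp; ring]
        rw [norm_neg, Real.norm_eq_abs, abs_div, abs_mul, abs_two, Nat.abs_cast]
    _ ≤ 2 * (‖1 - z ^ n‖ / ‖1 - z‖ ^ 2) / n := by
        gcongr; exact (Complex.abs_re_le_norm w).trans hw
    _ = 2 * (‖1 - z ^ n‖ / (n * ‖1 - z‖ ^ 2)) := by ring

end GordinLifsic

theorem gordin_lifsic_linear_variance_general
    (ν : Measure ℂ)
    (hsupp : ν {z : ℂ | ¬ ‖z‖ ≤ 1} = 0)
    (hGL : ∫⁻ z, (ENNReal.ofReal ‖1 - z‖)⁻¹ ∂ν < ⊤) :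
    ν {(1 : ℂ)} = 0 ∧
    sigmaSq ν < ⊤ ∧
    Tendsto (fun n : ℕ => (1 / (n : ℝ)) * ∫ z in {z : ℂ | z ≠ 1},
        ‖1 - z ^ n‖ ^ 2 / ‖1 - z‖ ^ 2 ∂ν) atTop (𝓝 0) ∧
    Tendsto (fun n : ℕ => VarSeq ν n / (n : ℝ)) atTop (𝓝 (sigmaSq ν).toReal) := by
  have h1 := measure_singleton_one_eq_zero hGL
  have hD : ∀ᵐ z ∂ν, ‖z‖ ≤ 1 := ae_iff.mpr hsupp
  have hint := integrable_inv_norm_one_sub hGL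
  have hσ := sigmaSq_eq_ofReal_integral h1 hD hint
  refine ⟨h1, hσ ▸ ENNReal.ofReal_lt_top,
    tendsto_inv_mul_setIntegral_norm_one_sub_pow_sq h1 hD hint, ?_⟩
  rw [hσ, ENNReal.toReal_ofReal (integral_nonneg_of_ae (hD.mono fun z hz =>
    poissonKernelOne_nonneg hz))]
  exact tendsto_varSeq_div h1 hD hint

/-- **Gordin–Lifšic condition (remark after Theorem 2.5).**  If
`∫_D |1-z|⁻¹ ν(dz) < ∞` (in particular `ν({1}) = 0`), then `σ² < ∞`,
`(1/n) ∫_D |1-zⁿ|²/|1-z|² ν(dz) → 0`, and `Var_n/n → σ²`. -/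
theorem gordin_lifsic_linear_variance
    (ν : Measure ℂ) [IsFiniteMeasure ν]
    (hsupp : ν {z : ℂ | ¬ ‖z‖ ≤ 1} = 0)
    (hconj : ∀ A : Set ℂ, MeasurableSet A → ν ((starRingEnd ℂ) ⁻¹' A) = ν A)
    (hGL : ∫⁻ z, (ENNReal.ofReal ‖1 - z‖)⁻¹ ∂ν < ⊤) :
    ν {(1 : ℂ)} = 0 ∧
    sigmaSq ν < ⊤ ∧
    Tendsto (fun n : ℕ => (1 / (n : ℝ)) * ∫ z in {z : ℂ | z ≠ 1},
        ‖1 - z ^ n‖ ^ 2 / ‖1 - z‖ ^ 2 ∂ν) atTop (𝓝 0) ∧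
    Tendsto (fun n : ℕ => VarSeq ν n / (n : ℝ)) atTop (𝓝 (sigmaSq ν).toReal) :=
  gordin_lifsic_linear_variance_general ν hsupp hGL
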